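/- Let P = (R, F) be a ProbLog program over atoms ℕ with F a finite list of facts (a_1, p_1), …, (a_n, p_n) with distinct atoms and p_i ∈ [0,1], such that the dependency relation of R is well-founded and no fact atom is the head of any clause. Let X : Finset ℕ, x : ℕ → Bool, let R_x be the sublist of R of clauses with head not in X, and let S(P) be the SWIFT transformation. For a world ε : Fin n → Bool define its weight π(ε) = ∏_i (p_i if ε i = true, else 1 − p_i); let m_S(ε) be the supported model of the clause list of S(P) extending the assignment sending Sum.inl a_i to ε i, all other Sum.inl atoms to false, and Sum.inr a to x a; and let m_x(ε) be the supported model of R_x extending the assignment sending a_i to ε i, atoms of X to x, and all other atoms to false. Then for every predicate φ : (ℕ → Bool) → Prop that depends only on the values of atoms not in X, the sum over all worlds ε of π(ε) · [φ (fun a => m_S(ε) (Sum.inl a))] equals the sum over all worlds ε of π(ε) · [φ (m_x(ε))]. That is, marginal inference on the SWIP computes exactly the interventional distribution P(φ | do(X := x)) of the encoded structural causal model. -/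

import Mathlib

/-- A clause: a head atom together with a body list of literals (atom, sign). -/
abbrev Clause (V : Type) := V × List (V × Bool)

/-- The dependency relation of a clause list: `Dep R a h` holds iff `a` is the
atom of some body literal of a clause of `R` with head `h`. -/
def Dep {V : Type} (R : List (Clause V)) (a h : V) : Prop :=
  ∃ c ∈ R, c.1 = h ∧ a ∈ c.2.map Prod.fst

/-- `f` is a supported model of `R` extending `e`. -/
def IsSupportedModel {V : Type} (R : List (Clause V)) (e f : V → Bool) : Prop :=
  (∀ a : V, (∀ c ∈ R, c.1 ≠ a) → f a = e a) ∧
  (∀ h : V, (∃ c ∈ R, c.1 = h) →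
    (f h = true ↔ ∃ c ∈ R, c.1 = h ∧ ∀ l ∈ c.2, f l.1 = l.2))

/-- The clauses of the SWIFT transformation. -/
def swiftClauses (X : Finset ℕ) (R : List (Clause ℕ)) : List (Clause (ℕ ⊕ ℕ)) :=
  (R.filter fun c => decide (c.1 ∉ X)).map fun c =>
    ((Sum.inl c.1 : ℕ ⊕ ℕ),
      c.2.map fun l =>
        if l.1 ∈ X then ((Sum.inr l.1 : ℕ ⊕ ℕ), l.2) else ((Sum.inl l.1 : ℕ ⊕ ℕ), l.2))

/-- The weight of a world `ε` (a truth assignment to the probabilistic facts):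
the product of `p_i` over true facts and `1 - p_i` over false facts. -/
def worldWeight (F : List (ℕ × ℝ)) (ε : Fin F.length → Bool) : ℝ :=
  ∏ i : Fin F.length, if ε i then (F.get i).2 else 1 - (F.get i).2

/-- The assignment on atoms induced by a world: the `i`-th fact atom gets `ε i`,
every other atom gets `false`. -/
def factAssign (F : List (ℕ × ℝ)) (ε : Fin F.length → Bool) (a : ℕ) : Bool :=
  match (List.finRange F.length).find? (fun i => (F.get i).1 == a) with
  | some i => ε i
  | none => false

/-! Read through the atom renaming `a ↦ if a ∈ X then inr a else inl a`, the supported model of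
the SWIFT program is a supported model of the intervened program `R_x` with the same extension.
`R_x` is acyclic, so its supported model is unique; hence the two models agree outside `X`, `φ`
cannot tell them apart, and the two sums agree world by world. -/

theorem Dep.mono {V : Type} {R R' : List (Clause V)} (hR : R' ⊆ R) {a h : V}
    (hdep : Dep R' a h) : Dep R a h :=
  let ⟨c, hc, hch, ha⟩ := hdep
  ⟨c, hR hc, hch, ha⟩

theorem IsSupportedModel.eq_of_wellFounded {V : Type} {R : List (Clause V)} {e f g : V → Bool}
    (hwf : WellFounded (Dep R)) (hf : IsSupportedModel R e f) (hg : IsSupportedModel R e g) :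
    f = g := by
  funext a
  induction a using hwf.induction with
  | _ h ih =>
    by_cases hhead : ∃ c ∈ R, c.1 = h
    · have hbody : ∀ c ∈ R, c.1 = h → ((∀ l ∈ c.2, f l.1 = l.2) ↔ ∀ l ∈ c.2, g l.1 = l.2) :=
        fun c hc hch => forall₂_congr fun l hl => by
          rw [ih l.1 ⟨c, hc, hch, List.mem_map_of_mem hl⟩]
      rw [Bool.eq_iff_iff, hf.2 h hhead, hg.2 h hhead]
      exact exists_congr fun c => and_congr_right fun hc => and_congr_right (hbody c hc)
    · push Not at hhead
      rw [hf.1 h hhead, hg.1 h hhead]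

def Clause.rename {V W : Type} (σ : V → W) (c : Clause V) : Clause W :=
  (σ c.1, c.2.map fun l => (σ l.1, l.2))

theorem IsSupportedModel.comp_of_map_rename {V W : Type} {R : List (Clause V)} {σ : V → W}
    (hσ : σ.Injective) {e f : W → Bool} (hf : IsSupportedModel (R.map (Clause.rename σ)) e f) :
    IsSupportedModel R (e ∘ σ) (f ∘ σ) := by
  refine ⟨fun a ha => hf.1 (σ a) ?_, fun h ⟨c, hc, hch⟩ => ?_⟩
  · simp only [List.mem_map, forall_exists_index, and_imp, forall_apply_eq_imp_iff₂]
    exact fun c hc hca => ha c hc (hσ hca)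
  · rw [Function.comp_apply, hf.2 (σ h) ⟨_, List.mem_map_of_mem hc, by rw [← hch]; rfl⟩]
    simp only [List.mem_map, exists_exists_and_eq_and, Clause.rename, hσ.eq_iff, forall_exists_index,
      and_imp, forall_apply_eq_imp_iff₂, Function.comp_apply]

def swiftAtom (X : Finset ℕ) (a : ℕ) : ℕ ⊕ ℕ :=
  if a ∈ X then .inr a else .inl a

theorem swiftAtom_injective (X : Finset ℕ) : (swiftAtom X).Injective := by
  intro a b hab
  unfold swiftAtom at hab
  split_ifs at hab <;> simpa using hab

theorem swiftClauses_eq_map_rename (X : Finset ℕ) (R : List (Clause ℕ)) :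
    swiftClauses X R = (R.filter fun c => decide (c.1 ∉ X)).map (Clause.rename (swiftAtom X)) := by
  refine List.map_congr_left fun c hc => ?_
  have hX : c.1 ∉ X := by simpa using (List.mem_filter.1 hc).2
  simp only [Clause.rename, swiftAtom, hX, if_false]
  congr 1
  refine List.map_congr_left fun l _ => ?_
  split_ifs <;> rfl

theorem IsSupportedModel.comp_swiftAtom {X : Finset ℕ} {R : List (Clause ℕ)} {e x : ℕ → Bool}
    {f : ℕ ⊕ ℕ → Bool} (hf : IsSupportedModel (swiftClauses X R) (Sum.elim e x) f) :
    IsSupportedModel (R.filter fun c => decide (c.1 ∉ X))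
      (fun a => if a ∈ X then x a else e a) (f ∘ swiftAtom X) := by
  rw [swiftClauses_eq_map_rename] at hf
  convert hf.comp_of_map_rename (swiftAtom_injective X) using 1
  funext a
  by_cases ha : a ∈ X <;> simp [swiftAtom, ha]

theorem swip_computes_interventional_distribution_general
    (R : List (Clause ℕ)) (F : List (ℕ × ℝ))
    (hwf : WellFounded (Dep R))
    (X : Finset ℕ) (x : ℕ → Bool)
    (mS : (Fin F.length → Bool) → (ℕ ⊕ ℕ) → Bool)
    (mx : (Fin F.length → Bool) → ℕ → Bool)
    (hmS : ∀ ε, IsSupportedModel (swiftClauses X R)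
      (Sum.elim (factAssign F ε) x) (mS ε))
    (hmx : ∀ ε, IsSupportedModel (R.filter fun c => decide (c.1 ∉ X))
      (fun a => if a ∈ X then x a else factAssign F ε a) (mx ε))
    (φ : (ℕ → Bool) → Prop) [DecidablePred φ]
    (hφ : ∀ f g : ℕ → Bool, (∀ a ∉ X, f a = g a) → (φ f ↔ φ g)) :
    ∑ ε : Fin F.length → Bool,
        worldWeight F ε * (if φ (fun a => mS ε (Sum.inl a)) then 1 else 0)
      = ∑ ε : Fin F.length → Bool,
          worldWeight F ε * (if φ (mx ε) then 1 else 0) := by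
  have hwfX : WellFounded (Dep (R.filter fun c => decide (c.1 ∉ X))) :=
    Subrelation.wf (Dep.mono (List.filter_subset_self R)) hwf
  have hagree : ∀ ε, ∀ a ∉ X, mS ε (.inl a) = mx ε a := fun ε a ha => by
    have hmodel := (hmS ε).comp_swiftAtom.eq_of_wellFounded hwfX (hmx ε)
    simpa [swiftAtom, ha] using congrFun hmodel a
  refine Finset.sum_congr rfl fun ε _ => ?_
  rw [if_congr (hφ _ _ (hagree ε)) rfl rfl]

theorem swip_computes_interventional_distribution
    (R : List (Clause ℕ)) (F : List (ℕ × ℝ))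
    (hdistinct : (F.map Prod.fst).Nodup)
    (hprob : ∀ f ∈ F, 0 ≤ f.2 ∧ f.2 ≤ 1)
    (hwf : WellFounded (Dep R))
    (hfact : ∀ f ∈ F, ∀ c ∈ R, c.1 ≠ f.1)
    (X : Finset ℕ) (x : ℕ → Bool)
    (mS : (Fin F.length → Bool) → (ℕ ⊕ ℕ) → Bool)
    (mx : (Fin F.length → Bool) → ℕ → Bool)
    (hmS : ∀ ε, IsSupportedModel (swiftClauses X R)
      (Sum.elim (factAssign F ε) x) (mS ε))
    (hmx : ∀ ε, IsSupportedModel (R.filter fun c => decide (c.1 ∉ X))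
      (fun a => if a ∈ X then x a else factAssign F ε a) (mx ε))
    (φ : (ℕ → Bool) → Prop) [DecidablePred φ]
    (hφ : ∀ f g : ℕ → Bool, (∀ a ∉ X, f a = g a) → (φ f ↔ φ g)) :
    ∑ ε : Fin F.length → Bool,
        worldWeight F ε * (if φ (fun a => mS ε (Sum.inl a)) then 1 else 0)
      = ∑ ε : Fin F.length → Bool,
          worldWeight F ε * (if φ (mx ε) then 1 else 0) :=
  swip_computes_interventional_distribution_general R F hwf X x mS mx hmS hmx φ hφ
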